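/- arXiv:1709.05172 — 4 statements merged into one kernel-verified Lean document; each statement's English description precedes it below -/
import Mathlib

section
/- Let K, P, M, N₀, B_w be positive reals, let b ≥ 1 be a real number with α = b/(b+1), and let E ≥ 0 satisfy 1 + E/4 − √α(1+E) > 0. Define the rate function R(W, E') = W · ln(1 + K·P²·M / ((K·P + N₀·W)²·(1 + E')²)) for W > 0, E' ≥ 0. If K·P/(B_w·N₀) > f, where f = α·(−1 − E/4 + 1/√α + E/√α)/(1 + E/4 − √α − E√α), then R(B_w, E) > R(α·B_w, E/4). -/
open Set

lemma log_concave_aux (a x : ℝ) (ha0 : 0 ≤ a) (ha1 : a ≤ 1) (hx : 0 ≤ x) :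
    a * Real.log (1 + x) ≤ Real.log (1 + a * x) := by
  have h := (strictConcaveOn_log_Ioi.concaveOn).2
    (Set.mem_Ioi.mpr (by linarith : (0:ℝ) < 1 + x))
    (Set.mem_Ioi.mpr (by norm_num : (0:ℝ) < 1))
    ha0 (by linarith : 0 ≤ 1 - a) (by ring)
  simp only [smul_eq_mul, Real.log_one, mul_zero, add_zero] at h
  rw [show a * (1 + x) + (1 - a) * 1 = 1 + a * x by ring] at h
  exact h

set_option maxHeartbeats 1000000 in
/-- Lemma 2: if the interference-to-noise ratio exceeds the threshold f,
    then for fixed M the rate with b bits at bandwidth B_w exceeds the rate with b+1 bits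
    at bandwidth αB_w. -/
theorem stmt_10 (K P M N₀ B_w b E : ℝ) (hK : 0 < K) (hP : 0 < P) (hM : 0 < M)
    (hN : 0 < N₀) (hB : 0 < B_w) (hb : 1 ≤ b) (hE : 0 ≤ E)
    (hden : 1 + E / 4 - Real.sqrt (b / (b + 1)) * (1 + E) > 0)
    (R : ℝ → ℝ → ℝ)
    (hR : ∀ W E' : ℝ, R W E' =
      W * Real.log (1 + K * P ^ 2 * M / ((K * P + N₀ * W) ^ 2 * (1 + E') ^ 2)))
    (hth : K * P / (B_w * N₀) >
      (b / (b + 1)) *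
          (-1 - E / 4 + 1 / Real.sqrt (b / (b + 1)) + E / Real.sqrt (b / (b + 1))) /
        (1 + E / 4 - Real.sqrt (b / (b + 1)) - E * Real.sqrt (b / (b + 1)))) :
    R B_w E > R ((b / (b + 1)) * B_w) (E / 4) := by
  set α : ℝ := b / (b + 1) with hα_def
  set s : ℝ := Real.sqrt α with hs_def
  have hb1 : (0:ℝ) < b + 1 := by linarith
  have hα0 : 0 < α := div_pos (by linarith) hb1
  have hα1 : α < 1 := (div_lt_one hb1).mpr (by linarith)
  have hss : s * s = α := Real.mul_self_sqrt hα0.le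
  have hs0 : 0 < s := Real.sqrt_pos.mpr hα0
  -- rewrite threshold numerator
  have hnum : α * (-1 - E / 4 + 1 / s + E / s) = s * (1 + E) - α * (1 + E / 4) := by
    field_simp
    nlinarith [hss]
  have hD : 0 < 1 + E / 4 - s * (1 + E) := hden
  have hBN : 0 < B_w * N₀ := mul_pos hB hN
  -- clear denominators in hth
  have hth' : (s * (1 + E) - α * (1 + E / 4)) * (B_w * N₀) <
      K * P * (1 + E / 4 - s * (1 + E)) := by
    have h := hth
    rw [show 1 + E / 4 - s - E * s = 1 + E / 4 - s * (1 + E) by ring, hnum] at h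
    exact (div_lt_div_iff₀ hD hBN).mp h
  -- linear key inequality
  have h3 : s * (1 + E) * (K * P + N₀ * B_w) < (K * P + N₀ * (α * B_w)) * (1 + E / 4) := by
    nlinarith [hth']
  -- positivity
  have hA : 0 < K * P + N₀ * B_w := by positivity
  have hA' : 0 < K * P + N₀ * (α * B_w) := by positivity
  have hu : 0 < 1 + E := by linarith
  have hv : 0 < 1 + E / 4 := by linarith
  -- squared inequality
  have h4 : α * ((K * P + N₀ * B_w) ^ 2 * (1 + E) ^ 2) <
      (K * P + N₀ * (α * B_w)) ^ 2 * (1 + E / 4) ^ 2 := by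
    have hL : 0 < s * (1 + E) * (K * P + N₀ * B_w) := by positivity
    have h4' := mul_self_lt_mul_self hL.le h3
    nlinarith [h4', hss]
  have hC : 0 < K * P ^ 2 * M := by positivity
  have hd1 : 0 < (K * P + N₀ * B_w) ^ 2 * (1 + E) ^ 2 := by positivity
  have hd2 : 0 < (K * P + N₀ * (α * B_w)) ^ 2 * (1 + E / 4) ^ 2 := by positivity
  set X₁ : ℝ := K * P ^ 2 * M / ((K * P + N₀ * B_w) ^ 2 * (1 + E) ^ 2) with hX₁
  set X₂ : ℝ := K * P ^ 2 * M / ((K * P + N₀ * (α * B_w)) ^ 2 * (1 + E / 4) ^ 2) with hX₂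
  have hX₂0 : 0 ≤ X₂ := le_of_lt (div_pos hC hd2)
  have h5 : α * X₂ < X₁ := by
    rw [hX₁, hX₂, mul_div_assoc', div_lt_div_iff₀ hd2 hd1]
    have h6 := mul_lt_mul_of_pos_left h4 hC
    ring_nf at h6 ⊢
    linarith
  rw [hR, hR]
  have step1 : α * B_w * Real.log (1 + X₂) ≤ B_w * Real.log (1 + α * X₂) := by
    have := log_concave_aux α X₂ hα0.le hα1.le hX₂0
    calc α * B_w * Real.log (1 + X₂) = B_w * (α * Real.log (1 + X₂)) := by ring
      _ ≤ B_w * Real.log (1 + α * X₂) := by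
          exact mul_le_mul_of_nonneg_left this hB.le
  have step2 : B_w * Real.log (1 + α * X₂) < B_w * Real.log (1 + X₁) := by
    apply mul_lt_mul_of_pos_left _ hB
    apply Real.log_lt_log (by positivity) (by linarith)
  calc ((b / (b + 1)) * B_w) * Real.log (1 + X₂) = α * B_w * Real.log (1 + X₂) := by rw [hα_def]
    _ ≤ B_w * Real.log (1 + α * X₂) := step1
    _ < B_w * Real.log (1 + X₁) := step2
end

section
/- Let K, P, N₀, B_w, M be positive reals and let 0 < E₀ ≤ 2. Define R(M', b) = B_w · log₂(1 + K·P²·M' / ((K·P + N₀·B_w)²·(1 + E₀·4^(−b))²)) for M' > 0 and positive integers b. Then for every integer b ≥ 2, R(M·b/(b−1), b−1) > R(M, b), and the two configurations use equal fronthaul rates: B_w·(M·b/(b−1))·(b−1) = B_w·M·b. Consequently, for any fronthaul capacity C_f, every feasible triple (B_w, M, b) with b ≥ 2 and B_w·M·b ≤ C_f is strictly dominated by a feasible triple with b = 1. -/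
lemma aux4 (b : ℕ) (hb : 2 ≤ b) : 6*b - 8 ≤ 4^(b-1) := by
  induction b, hb using Nat.le_induction with
  | base => norm_num
  | succ n hn ih =>
    have e : (4:ℕ)^(n+1-1) = 4^(n-1) * 4 := by
      rw [show n+1-1 = n-1+1 by omega, pow_succ]
    omega

lemma aux16 (b : ℕ) (hb : 2 ≤ b) : 15*b - 16 ≤ 16^(b-1) := by
  induction b, hb using Nat.le_induction with
  | base => norm_num
  | succ n hn ih =>
    have e : (16:ℕ)^(n+1-1) = 16^(n-1) * 16 := by
      rw [show n+1-1 = n-1+1 by omega, pow_succ]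
    omega

lemma helperR (K P N₀ B E₀ M₁ M₂ e₁ e₂ : ℝ) (hK : 0 < K) (hP : 0 < P) (hN : 0 < N₀)
    (hB : 0 < B) (hM₁ : 0 < M₁) (he₁ : 0 < e₁) (he₂ : 0 < e₂) (hE : 0 < E₀)
    (h : M₁ * (1 + E₀*e₂)^2 < M₂ * (1 + E₀*e₁)^2) :
    B * Real.logb 2 (1 + K*P^2*M₁ / ((K*P+N₀*B)^2 * (1+E₀*e₁)^2)) <
    B * Real.logb 2 (1 + K*P^2*M₂ / ((K*P+N₀*B)^2 * (1+E₀*e₂)^2)) := by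
  have hd₁ : 0 < (K*P+N₀*B)^2 * (1+E₀*e₁)^2 := by positivity
  have hd₂ : 0 < (K*P+N₀*B)^2 * (1+E₀*e₂)^2 := by positivity
  have hfrac : K*P^2*M₁ / ((K*P+N₀*B)^2 * (1+E₀*e₁)^2) <
      K*P^2*M₂ / ((K*P+N₀*B)^2 * (1+E₀*e₂)^2) := by
    rw [div_lt_div_iff₀ hd₁ hd₂]
    have hC : 0 < K*P^2*(K*P+N₀*B)^2 := by positivity
    nlinarith [mul_lt_mul_of_pos_left h hC]
  have h0 : 0 < 1 + K*P^2*M₁ / ((K*P+N₀*B)^2 * (1+E₀*e₁)^2) := by positivity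
  exact mul_lt_mul_of_pos_left (Real.logb_lt_logb (by norm_num) h0 (by linarith)) hB

set_option maxHeartbeats 1000000 in
/-- Theorem 1: going from b ≥ 2 bits with M antennas to b-1 bits with
    Mb/(b-1) antennas keeps the fronthaul rate equal and strictly increases the rate;
    consequently every feasible triple with b ≥ 2 is strictly dominated by a feasible
    configuration with b = 1. -/
theorem stmt_11 (K P N₀ B_w M E₀ : ℝ) (hK : 0 < K) (hP : 0 < P) (hN : 0 < N₀)
    (hB : 0 < B_w) (hM : 0 < M) (hE₀ : 0 < E₀) (hE₂ : E₀ ≤ 2)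
    (R : ℝ → ℝ → ℕ → ℝ)
    (hR : ∀ (B M' : ℝ) (b : ℕ), R B M' b =
      B * Real.logb 2 (1 + K * P ^ 2 * M' /
        ((K * P + N₀ * B) ^ 2 * (1 + E₀ * (4 : ℝ) ^ (-(b : ℝ))) ^ 2))) :
    (∀ b : ℕ, 2 ≤ b →
      R B_w (M * (b : ℝ) / ((b : ℝ) - 1)) (b - 1) > R B_w M b ∧
      B_w * (M * (b : ℝ) / ((b : ℝ) - 1)) * ((b : ℝ) - 1) = B_w * M * (b : ℝ)) ∧
    (∀ C_f : ℝ, ∀ b : ℕ, 2 ≤ b → B_w * M * (b : ℝ) ≤ C_f →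
      ∃ B' M' : ℝ, 0 < B' ∧ 0 < M' ∧ B' * M' * (1 : ℝ) ≤ C_f ∧ R B' M' 1 > R B_w M b) := by
  -- common facts about q = 4^(-b)
  have main : ∀ b : ℕ, 2 ≤ b → R B_w (M * (b : ℝ) / ((b : ℝ) - 1)) (b - 1) > R B_w M b := by
    intro b hb
    set n : ℝ := (b : ℝ) with hn
    have hn2 : (2:ℝ) ≤ n := by rw [hn]; exact_mod_cast hb
    have hn1 : 0 < n - 1 := by linarith
    set q : ℝ := ((4:ℝ)^b)⁻¹ with hqdef
    have hqpos : 0 < q := by positivity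
    have hq : (4:ℝ)^(-(b:ℝ)) = q := by
      rw [Real.rpow_neg (by norm_num), Real.rpow_natCast]
    have hcast : (((b-1:ℕ)):ℝ) = n - 1 := by
      rw [Nat.cast_sub (by omega : 1 ≤ b)]; norm_num; rfl
    have hq' : (4:ℝ)^(-(((b-1:ℕ)):ℝ)) = 4*q := by
      rw [hcast, show -(n-1) = 1 + -(b:ℝ) by push_cast [hn]; ring,
        Real.rpow_add (by norm_num), Real.rpow_one, hq]
    -- cast the nat power bounds
    have hpow4 : (4:ℝ)^(b-1) * 4 = (4:ℝ)^b := by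
      rw [← pow_succ]; congr 1; omega
    have hpow16 : (16:ℝ)^(b-1) * 16 = (16:ℝ)^b := by
      rw [← pow_succ]; congr 1; omega
    have hq2 : (16:ℝ)^b * q^2 = 1 := by
      have : ((4:ℝ)^b)^2 = 16^b := by
        rw [← pow_mul, mul_comm, pow_mul]; norm_num
      rw [hqdef, ← this]
      field_simp
    have h4 : (6*n - 8) * (4*q) ≤ 1 := by
      have h := aux4 b hb
      have hc : ((6*b - 8 : ℕ) : ℝ) = 6*n - 8 := by
        rw [Nat.cast_sub (by omega : 8 ≤ 6*b)]; push_cast; ring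
      have h' : 6*n - 8 ≤ (4:ℝ)^(b-1) := by
        rw [← hc]; exact_mod_cast h
      have hq1 : (4:ℝ)^b * q = 1 := by
        rw [hqdef]; field_simp
      nlinarith [mul_le_mul_of_nonneg_right h' (by positivity : (0:ℝ) ≤ 4*q)]
    have h16 : (15*n - 16) * (16*q^2) ≤ 1 := by
      have h := aux16 b hb
      have hc : ((15*b - 16 : ℕ) : ℝ) = 15*n - 16 := by
        rw [Nat.cast_sub (by omega : 16 ≤ 15*b)]; push_cast; ring
      have h' : 15*n - 16 ≤ (16:ℝ)^(b-1) := by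
        rw [← hc]; exact_mod_cast h
      nlinarith [mul_le_mul_of_nonneg_right h' (by positivity : (0:ℝ) ≤ 16*q^2)]
    -- the key polynomial inequality
    have key : (n-1) * (1 + E₀*(4*q))^2 < n * (1 + E₀*q)^2 := by
      have hx : 0 < E₀ * q := by positivity
      have h68 : (0:ℝ) ≤ 6*n-8 := by linarith
      have h1516 : (0:ℝ) ≤ 15*n-16 := by linarith
      have hEq : E₀*q ≤ 2*q := mul_le_mul_of_nonneg_right hE₂ hqpos.le
      have hE4 : E₀^2*q^2 ≤ 4*q^2 := by nlinarith [sq_nonneg q]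
      have h1 : (6*n - 8) * (E₀*q) ≤ 1/2 := by
        nlinarith [mul_le_mul_of_nonneg_left hEq h68, h4]
      have h2 : (15*n - 16) * (E₀^2*q^2) ≤ 1/4 := by
        nlinarith [mul_le_mul_of_nonneg_left hE4 h1516, h16]
      nlinarith [h1, h2, hx]
    have hkey2 : M * (1 + E₀*(4*q))^2 < (M * n / (n-1)) * (1 + E₀*q)^2 := by
      rw [show M * n / (n-1) * (1 + E₀*q)^2 = (M * (n * (1 + E₀*q)^2)) / (n-1) by ring,
        lt_div_iff₀ hn1]
      nlinarith [mul_lt_mul_of_pos_left key hM]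
    rw [hR, hR, hq, hq']
    exact helperR K P N₀ B_w E₀ M (M*n/(n-1)) q (4*q) hK hP hN hB hM hqpos
      (by positivity) hE₀ hkey2
  constructor
  · intro b hb
    refine ⟨main b hb, ?_⟩
    have hn1 : ((b:ℝ) - 1) ≠ 0 := by
      have : (2:ℝ) ≤ (b:ℝ) := by exact_mod_cast hb
      intro h; linarith [this]
    field_simp
  · intro C_f b hb hcf
    refine ⟨B_w, M * (b:ℝ), hB, by positivity, by nlinarith, ?_⟩
    set n : ℝ := (b : ℝ) with hn
    have hn2 : (2:ℝ) ≤ n := by rw [hn]; exact_mod_cast hb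
    set q : ℝ := ((4:ℝ)^b)⁻¹ with hqdef
    have hqpos : 0 < q := by positivity
    have hq : (4:ℝ)^(-(b:ℝ)) = q := by
      rw [Real.rpow_neg (by norm_num), Real.rpow_natCast]
    have hq1 : (4:ℝ)^(-((1:ℕ):ℝ)) = (1:ℝ)/4 := by
      norm_num [Real.rpow_neg_one]
    have key : M * (1 + E₀*(1/4))^2 < (M*n) * (1 + E₀*q)^2 := by
      have hkey : (1 + E₀*(1/4))^2 < n * (1 + E₀*q)^2 := by
        rcases Nat.lt_or_ge b 3 with h3 | h3
        · have hb2 : b = 2 := by omega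
          subst hb2
          have : q = 1/16 := by rw [hqdef]; norm_num
          rw [this]
          simp only [hn]
          push_cast
          nlinarith [mul_nonneg (by linarith : (0:ℝ) ≤ 2 - E₀) hE₀.le]
        · have hn3 : (3:ℝ) ≤ n := by rw [hn]; exact_mod_cast h3
          have hx : 0 < E₀ * q := by positivity
          nlinarith [mul_nonneg hx.le hx.le, mul_nonneg (by linarith : (0:ℝ) ≤ n) hx.le,
            mul_nonneg (by linarith : (0:ℝ) ≤ n) (sq_nonneg (E₀*q))]
      nlinarith [mul_lt_mul_of_pos_left hkey hM]
    rw [hR, hR, hq, hq1]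
    exact helperR K P N₀ B_w E₀ M (M*n) q (1/4) hK hP hN hB hM hqpos
      (by norm_num) hE₀ key
end

section
/- Let A, q, r > 0 and define R(s) = s · ln(1 + A / (s·(q + r·s)²)) for s > 0. If s > 0 satisfies A·(q − r·s) > 4·r·s²·(q + r·s)², then R is differentiable at s and R′(s) > 0. -/
open Real

private lemma pade_hasDeriv (y : ℝ) (hy : 0 ≤ y) :
    HasDerivAt (fun z : ℝ => Real.log (1 + z) - 2 * z / (2 + z))
      (1 / (1 + y) - 4 / (2 + y) ^ 2) y := by
  have h1 : HasDerivAt (fun z : ℝ => 1 + z) 1 y := (hasDerivAt_id y).const_add 1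
  have hne : (1 : ℝ) + y ≠ 0 := by linarith
  have hlog : HasDerivAt (fun z : ℝ => Real.log (1 + z)) (1 / (1 + y)) y := h1.log hne
  have h2 : HasDerivAt (fun z : ℝ => 2 * z) 2 y := by
    simpa using (hasDerivAt_id y).const_mul 2
  have h3 : HasDerivAt (fun z : ℝ => 2 + z) 1 y := (hasDerivAt_id y).const_add 2
  have hne2 : (2 : ℝ) + y ≠ 0 := by linarith
  have hdiv := h2.div h3 hne2
  have heq : (2 * (2 + y) - 2 * y * 1) / (2 + y) ^ 2 = 4 / (2 + y) ^ 2 := by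
    congr 1; ring
  rw [show (1:ℝ) / (1 + y) - 4 / (2 + y) ^ 2
      = 1 / (1 + y) - (2 * (2 + y) - 2 * y * 1) / (2 + y) ^ 2 from by rw [heq]]
  exact hlog.sub hdiv

private lemma pade_log (x : ℝ) (hx : 0 ≤ x) : 2 * x / (2 + x) ≤ Real.log (1 + x) := by
  have mono : MonotoneOn (fun z : ℝ => Real.log (1 + z) - 2 * z / (2 + z)) (Set.Ici 0) := by
    apply monotoneOn_of_deriv_nonneg (convex_Ici 0)
    · intro y hy
      exact (pade_hasDeriv y hy).continuousAt.continuousWithinAt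
    · intro y hy
      rw [interior_Ici] at hy
      exact (pade_hasDeriv y (le_of_lt hy)).differentiableAt.differentiableWithinAt
    · intro y hy
      rw [interior_Ici] at hy
      have hy0 : 0 < y := hy
      rw [(pade_hasDeriv y (le_of_lt hy0)).deriv]
      have h1 : (0:ℝ) < 1 + y := by linarith
      have h2 : (0:ℝ) < (2 + y) ^ 2 := pow_pos (by linarith) 2
      rw [sub_nonneg, div_le_div_iff₀ h2 h1]
      nlinarith [sq_nonneg y]
  have := mono (Set.self_mem_Ici) (Set.mem_Ici.2 hx) hx
  norm_num at this
  linarith [this]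

/-- along the fronthaul curve, if A·(q − r·s) > 4·r·s²·(q + r·s)², the rate
    R(s) = s·ln(1 + A/(s(q+rs)²)) is differentiable at s with positive derivative. -/
theorem stmt_12 (A q r s : ℝ) (hA : 0 < A) (hq : 0 < q) (hr : 0 < r) (hs : 0 < s)
    (h : A * (q - r * s) > 4 * r * s ^ 2 * (q + r * s) ^ 2) :
    DifferentiableAt ℝ (fun t : ℝ => t * Real.log (1 + A / (t * (q + r * t) ^ 2))) s ∧
      0 < deriv (fun t : ℝ => t * Real.log (1 + A / (t * (q + r * t) ^ 2))) s := by
  have hqs : 0 < q + r * s := by positivity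
  have hg : 0 < s * (q + r * s) ^ 2 := by positivity
  have hgne : s * (q + r * s) ^ 2 ≠ 0 := ne_of_gt hg
  -- derivative of the inner polynomial
  have h1 : HasDerivAt (fun t : ℝ => q + r * t) r s := by
    simpa using ((hasDerivAt_id s).const_mul r).const_add q
  have h2 : HasDerivAt (fun t : ℝ => (q + r * t) ^ 2) (2 * (q + r * s) ^ 1 * r) s := by
    simpa [Pi.pow_def] using h1.pow 2
  have hG : HasDerivAt (fun t : ℝ => t * (q + r * t) ^ 2)
      (1 * (q + r * s) ^ 2 + s * (2 * (q + r * s) ^ 1 * r)) s :=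
    (hasDerivAt_id s).mul h2
  have hdivd : HasDerivAt (fun t : ℝ => A / (t * (q + r * t) ^ 2))
      ((0 * (s * (q + r * s) ^ 2) - A * (1 * (q + r * s) ^ 2 + s * (2 * (q + r * s) ^ 1 * r))) /
        (s * (q + r * s) ^ 2) ^ 2) s :=
    (hasDerivAt_const s A).div hG hgne
  have hu : HasDerivAt (fun t : ℝ => 1 + A / (t * (q + r * t) ^ 2))
      ((0 * (s * (q + r * s) ^ 2) - A * (1 * (q + r * s) ^ 2 + s * (2 * (q + r * s) ^ 1 * r))) /
        (s * (q + r * s) ^ 2) ^ 2) s := hdivd.const_add 1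
  have hus : 0 < 1 + A / (s * (q + r * s) ^ 2) := by positivity
  have hlog : HasDerivAt (fun t : ℝ => Real.log (1 + A / (t * (q + r * t) ^ 2)))
      (((0 * (s * (q + r * s) ^ 2) - A * (1 * (q + r * s) ^ 2 + s * (2 * (q + r * s) ^ 1 * r))) /
        (s * (q + r * s) ^ 2) ^ 2) / (1 + A / (s * (q + r * s) ^ 2))) s :=
    hu.log (ne_of_gt hus)
  have hid : HasDerivAt (fun t : ℝ => t) 1 s := hasDerivAt_id s
  have hf : HasDerivAt (fun t : ℝ => t * Real.log (1 + A / (t * (q + r * t) ^ 2)))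
      (1 * Real.log (1 + A / (s * (q + r * s) ^ 2)) +
        s * (((0 * (s * (q + r * s) ^ 2) -
          A * (1 * (q + r * s) ^ 2 + s * (2 * (q + r * s) ^ 1 * r))) /
            (s * (q + r * s) ^ 2) ^ 2) / (1 + A / (s * (q + r * s) ^ 2)))) s :=
    hid.mul hlog
  refine ⟨hf.differentiableAt, ?_⟩
  rw [hf.deriv]
  set g : ℝ := s * (q + r * s) ^ 2 with hgdef
  -- the derivative term from the log
  have hterm : ((0 * g - A * (1 * (q + r * s) ^ 2 + s * (2 * (q + r * s) ^ 1 * r))) / g ^ 2) /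
      (1 + A / g) = -(A * (q + r * s) * (q + 3 * r * s)) / (g * (g + A)) := by
    have hgA : g + A ≠ 0 := by positivity
    field_simp
    ring
  rw [hterm]
  -- lower bound the log
  have hx : 0 ≤ A / g := le_of_lt (by positivity)
  have hlb := pade_log (A / g) hx
  have key : 0 < 2 * (A / g) / (2 + A / g) +
      s * (-(A * (q + r * s) * (q + 3 * r * s)) / (g * (g + A))) := by
    have hd1 : 0 < 2 + A / g := by positivity
    have hd2 : 0 < g * (g + A) := by positivity
    have e1 : 2 * (A / g) / (2 + A / g) = 2 * A / (2 * g + A) := by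
      rw [hgdef]
      field_simp
    have e2 : s * (-(A * (q + r * s) * (q + 3 * r * s)) / (g * (g + A)))
        = -(s * (A * (q + r * s) * (q + 3 * r * s)) / (g * (g + A))) := by ring
    rw [e1, e2, ← sub_eq_add_neg, sub_pos,
      div_lt_div_iff₀ (by positivity) (by positivity)]
    have hkey2 : (q + 3 * r * s) * (2 * g + A) < 2 * (q + r * s) * (g + A) := by
      rw [hgdef]; nlinarith [h]
    have hpos : 0 < A * s * (q + r * s) := by positivity
    have h3 := mul_lt_mul_of_pos_left hkey2 hpos
    rw [hgdef] at h3 ⊢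
    nlinarith [h3]
  calc (0:ℝ) < 2 * (A / g) / (2 + A / g) +
      s * (-(A * (q + r * s) * (q + 3 * r * s)) / (g * (g + A))) := key
    _ ≤ _ := by
        have := hlb
        nlinarith [hlb]
end

section
/- Let A, q, r > 0 and define R(s) = s · ln(1 + A / (s·(q + r·s)²)) for s > 0. If s > 0 satisfies A < 4·r·s²·(q + r·s), then R is differentiable at s and R′(s) < 0. -/
/-- Trapezoid bound: `log (1+x) ≤ (x + x/(1+x))/2` for `x ≥ 0`. -/
lemma log_trapezoid (x : ℝ) (hx : 0 ≤ x) :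
    Real.log (1 + x) ≤ (x + x / (1 + x)) / 2 := by
  set F : ℝ → ℝ := fun y => (y + y / (1 + y)) / 2 - Real.log (1 + y) with hF
  have key : ∀ y : ℝ, 0 ≤ y → HasDerivAt F ((1 + y)⁻¹ ^ 2 * ((1 + y - 1) ^ 2 / 2)) y := by
    intro y hy
    have hne : (1 : ℝ) + y ≠ 0 := by positivity
    have h1 : HasDerivAt (fun z : ℝ => 1 + z) 1 y := (hasDerivAt_id y).const_add 1
    have h2 : HasDerivAt (fun z : ℝ => z / (1 + z))
        ((1 * (1 + y) - y * 1) / (1 + y) ^ 2) y := (hasDerivAt_id y).div h1 hne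
    have h3 : HasDerivAt (fun z : ℝ => Real.log (1 + z)) (1 / (1 + y)) y := h1.log hne
    have := (((hasDerivAt_id y).add h2).div_const 2).sub h3
    refine this.congr_deriv ?_
    field_simp
    ring
  have hmono : MonotoneOn F (Set.Ici (0 : ℝ)) := by
    apply monotoneOn_of_deriv_nonneg (convex_Ici 0)
    · exact fun y hy => ((key y hy).continuousAt).continuousWithinAt
    · intro y hy
      rw [interior_Ici] at hy
      exact ((key y (le_of_lt hy)).differentiableAt).differentiableWithinAt
    · intro y hy
      rw [interior_Ici] at hy
      rw [(key y hy.le).deriv]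
      positivity
  have h0 : F 0 = 0 := by simp [hF]
  have := hmono (Set.self_mem_Ici) (Set.mem_Ici.mpr hx) hx
  rw [h0] at this
  simp only [hF] at this
  linarith

/-- along the fronthaul curve, if A < 4·r·s²·(q + r·s), the rate
    R(s) = s·ln(1 + A/(s(q+rs)²)) is differentiable at s with negative derivative. -/
theorem stmt_13 (A q r s : ℝ) (hA : 0 < A) (hq : 0 < q) (hr : 0 < r) (hs : 0 < s)
    (h : A < 4 * r * s ^ 2 * (q + r * s)) :
    DifferentiableAt ℝ (fun t : ℝ => t * Real.log (1 + A / (t * (q + r * t) ^ 2))) s ∧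
      deriv (fun t : ℝ => t * Real.log (1 + A / (t * (q + r * t) ^ 2))) s < 0 := by
  have hc : 0 < q + r * s := by positivity
  have hD : 0 < s * (q + r * s) ^ 2 := by positivity
  have hDne : s * (q + r * s) ^ 2 ≠ 0 := hD.ne'
  -- derivative of the inner polynomial
  have hcd : HasDerivAt (fun t : ℝ => q + r * t) r s := by
    simpa using ((hasDerivAt_id s).const_mul r).const_add q
  have hu : HasDerivAt (fun t : ℝ => t * (q + r * t) ^ 2)
      (1 * (q + r * s) ^ 2 + s * (2 * (q + r * s) ^ 1 * r)) s :=
    (hasDerivAt_id s).mul (hcd.pow 2)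
  set D' : ℝ := 1 * (q + r * s) ^ 2 + s * (2 * (q + r * s) ^ 1 * r) with hD'
  have hv : HasDerivAt (fun t : ℝ => 1 + A / (t * (q + r * t) ^ 2))
      ((0 * (s * (q + r * s) ^ 2) - A * D') / (s * (q + r * s) ^ 2) ^ 2) s :=
    ((hasDerivAt_const s A).div hu hDne).const_add 1
  have hvpos : 0 < 1 + A / (s * (q + r * s) ^ 2) := by positivity
  have hlog : HasDerivAt (fun t : ℝ => Real.log (1 + A / (t * (q + r * t) ^ 2)))
      (((0 * (s * (q + r * s) ^ 2) - A * D') / (s * (q + r * s) ^ 2) ^ 2) /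
        (1 + A / (s * (q + r * s) ^ 2))) s := hv.log hvpos.ne'
  have hf : HasDerivAt (fun t : ℝ => t * Real.log (1 + A / (t * (q + r * t) ^ 2)))
      (1 * Real.log (1 + A / (s * (q + r * s) ^ 2)) +
        s * (((0 * (s * (q + r * s) ^ 2) - A * D') / (s * (q + r * s) ^ 2) ^ 2) /
          (1 + A / (s * (q + r * s) ^ 2)))) s :=
    (hasDerivAt_id s).mul hlog
  refine ⟨hf.differentiableAt, ?_⟩
  rw [hf.deriv]
  set x : ℝ := A / (s * (q + r * s) ^ 2) with hx
  have hxpos : 0 < x := by positivity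
  have hb := log_trapezoid x hxpos.le
  have hstep : 1 * Real.log (1 + x) +
      s * (((0 * (s * (q + r * s) ^ 2) - A * D') / (s * (q + r * s) ^ 2) ^ 2) / (1 + x))
      ≤ (x + x / (1 + x)) / 2 +
      s * (((0 * (s * (q + r * s) ^ 2) - A * D') / (s * (q + r * s) ^ 2) ^ 2) / (1 + x)) := by
    nlinarith [hb]
  refine lt_of_le_of_lt hstep ?_
  have hEq : (x + x / (1 + x)) / 2 +
      s * (((0 * (s * (q + r * s) ^ 2) - A * D') / (s * (q + r * s) ^ 2) ^ 2) / (1 + x))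
      = A * (A - 4 * r * s ^ 2 * (q + r * s)) /
        (2 * (s * (q + r * s) ^ 2) * (s * (q + r * s) ^ 2 + A)) := by
    have h1x : (1 : ℝ) + x ≠ 0 := by positivity
    rw [hx, hD']
    field_simp
    ring
  rw [hEq]
  apply div_neg_of_neg_of_pos
  · exact mul_neg_of_pos_of_neg hA (by linarith)
  · positivity
end
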